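/- Let n ≥ 1, s ∈ (0, n/2), and let C₁ > 0. Suppose H : ℝⁿ → (0,∞) is C¹ with ‖H‖_{C^{0,γ}(ℝⁿ)} ≤ C₁, |∇H(x)| ≤ C₁ H(x) for all x, and H(x)/H(y) ≤ C₁ whenever |x - y| < 1. Let f : [0,∞) → [0,∞) be continuous with f(t) t^{-(n+2s)/(n-2s)} nonincreasing and positive on (0,∞), and satisfying the Lipschitz-type condition |f(t) - f(r)| ≤ C(t^μ + t^{p-1})(t-r) for 0 ≤ r < t, where 1 < p < (n+2s)/(n-2s) and 0 < μ ≤ p - 1. Then for every nonnegative v ∈ C^{0,γ}(ℝⁿ), the function x ↦ H(x)^{(n+2s)/(n-2s)} f(H(x)^{-1} v(x)) belongs to C^{0,γ}(ℝⁿ), with Hölder norm bounded by a constant depending only on C₁, f, and ‖v‖_{C^{0,γ}(ℝⁿ)}. -/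

import Mathlib

/-! With `G(a, w) = a ^ q * f (w / a)` the function is `G(H, v)`. Taking `r = 0` and `t = w / a`
in the Lipschitz-type condition, each power `t ^ e` of its weight enters only through
`a ^ (q - 1) * (w / a) ^ e = a ^ (q - 1 - e) * w ^ e`, bounded for `a ≤ C₁`, `w ≤ Kv` because
`e ≤ p - 1 ≤ q - 1`. Hence `G` is bounded on `(0, C₁] × [0, Kv]` and Lipschitz there in
`(log a, w)`: near `a = 0` it is `log a`, not `a`, that controls `G`. Since `|∇H| ≤ C₁ H`,
`log H` is globally `C₁`-Lipschitz, so `G(H, v)` is `γ`-Hölder at distances below `1`, and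
bounded beyond. -/

open Real

lemma rpow_sub_rpow_le_mul_log_sub {a b : ℝ} (q : ℝ) (ha : 0 < a) (hb : 0 < b) :
    a ^ q - b ^ q ≤ q * a ^ q * (log a - log b) := by
  have hab : 0 < (a / b) ^ q := by positivity
  have key := one_sub_inv_le_log_of_pos hab
  rw [log_rpow (div_pos ha hb), log_div ha.ne' hb.ne', div_rpow ha.le hb.le, inv_div] at key
  have hq : 0 < a ^ q := by positivity
  rw [sub_le_iff_le_add, ← sub_le_iff_le_add', le_div_iff₀ hq] at key
  linarith

lemma rpow_mul_div_rpow_le {Q e a w K₁ K₂ : ℝ} (he : 0 ≤ e) (heQ : e ≤ Q)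
    (ha : 0 < a) (haK : a ≤ K₁) (hw : 0 ≤ w) (hwK : w ≤ K₂) :
    a ^ Q * (w / a) ^ e ≤ K₁ ^ (Q - e) * K₂ ^ e := by
  have hsplit : a ^ Q * (w / a) ^ e = a ^ (Q - e) * w ^ e := by
    rw [div_rpow hw ha.le, rpow_sub ha]
    field_simp
  rw [hsplit]
  exact mul_le_mul (rpow_le_rpow ha.le haK (by linarith)) (rpow_le_rpow hw hwK he)
    (by positivity) (rpow_nonneg (ha.le.trans haK) _)

lemma abs_log_sub_log_le_of_norm_fderiv_le {E : Type*} [NormedAddCommGroup E] [NormedSpace ℝ E]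
    {H : E → ℝ} {L : ℝ} (hH : Differentiable ℝ H) (hpos : ∀ x, 0 < H x)
    (hgrad : ∀ x, ‖fderiv ℝ H x‖ ≤ L * H x) (x y : E) :
    |log (H x) - log (H y)| ≤ L * ‖x - y‖ := by
  have hderiv : ∀ z ∈ Set.univ, HasFDerivWithinAt (fun z => log (H z))
      ((H z)⁻¹ • fderiv ℝ H z) Set.univ z :=
    fun z _ => ((hH z).hasFDerivAt.log (hpos z).ne').hasFDerivWithinAt
  have hbound : ∀ z ∈ Set.univ, ‖(H z)⁻¹ • fderiv ℝ H z‖ ≤ L := by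
    intro z _
    rw [norm_smul, norm_inv, Real.norm_of_nonneg (hpos z).le, inv_mul_le_iff₀ (hpos z), mul_comm]
    exact hgrad z
  simpa using convex_univ.norm_image_sub_le_of_norm_hasFDerivWithin_le hderiv hbound
    (Set.mem_univ y) (Set.mem_univ x)

lemma exists_bound_and_holder_of_local {E : Type*} [SeminormedAddCommGroup E] {g : E → ℝ}
    {A B γ : ℝ} (hγ : 0 ≤ γ) (hbd : ∀ x, |g x| ≤ B)
    (hloc : ∀ x y, ‖x - y‖ < 1 → |g x - g y| ≤ A * ‖x - y‖ ^ γ) :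
    ∃ C, 0 < C ∧ (∀ x, |g x| ≤ C) ∧ ∀ x y, |g x - g y| ≤ C * ‖x - y‖ ^ γ := by
  have hB : 0 ≤ B := (abs_nonneg _).trans (hbd 0)
  refine ⟨|A| + 2 * B + 1, by positivity, fun x => by linarith [hbd x, abs_nonneg A], ?_⟩
  intro x y
  have hd : 0 ≤ ‖x - y‖ ^ γ := by positivity
  rcases lt_or_ge ‖x - y‖ 1 with hnear | hfar
  · calc |g x - g y| ≤ A * ‖x - y‖ ^ γ := hloc x y hnear
      _ ≤ (|A| + 2 * B + 1) * ‖x - y‖ ^ γ := by gcongr; linarith [le_abs_self A]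
  · have hd1 : 1 ≤ ‖x - y‖ ^ γ := one_le_rpow hfar hγ
    calc |g x - g y| ≤ |g x| + |g y| := abs_sub _ _
      _ ≤ 2 * B * 1 := by linarith [hbd x, hbd y]
      _ ≤ (|A| + 2 * B + 1) * ‖x - y‖ ^ γ := by gcongr; linarith [abs_nonneg A]

noncomputable def scaledNonlinearity (f : ℝ → ℝ) (q a w : ℝ) : ℝ := a ^ q * f (w / a)

section

variable {f ω : ℝ → ℝ} {q Λ : ℝ}

lemma abs_scaledNonlinearity_le {a w K₁ K₂ : ℝ} (hq : 0 ≤ q) (hΛ : 0 ≤ Λ)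
    (hf : ∀ r t, 0 ≤ r → r ≤ t → |f t - f r| ≤ ω t * (t - r))
    (hω : a ^ (q - 1) * ω (w / a) ≤ Λ)
    (ha : 0 < a) (haK : a ≤ K₁) (hw : 0 ≤ w) (hwK : w ≤ K₂) :
    |scaledNonlinearity f q a w| ≤ |f 0| * K₁ ^ q + Λ * K₂ := by
  have hf0 : |f (w / a)| ≤ |f 0| + ω (w / a) * (w / a) := by
    have := hf 0 (w / a) le_rfl (by positivity)
    rw [sub_zero] at this
    linarith [abs_sub_abs_le_abs_sub (f (w / a)) (f 0)]
  have hweight : a ^ q * (ω (w / a) * (w / a)) = a ^ (q - 1) * ω (w / a) * w := by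
    rw [rpow_sub_one ha.ne']
    field_simp
  have haq : a ^ q ≤ K₁ ^ q := rpow_le_rpow ha.le haK hq
  calc |scaledNonlinearity f q a w| = a ^ q * |f (w / a)| := by
        rw [scaledNonlinearity, abs_mul, abs_of_pos (by positivity)]
    _ ≤ a ^ q * |f 0| + a ^ (q - 1) * ω (w / a) * w := by
        rw [← hweight, ← mul_add]; gcongr
    _ ≤ K₁ ^ q * |f 0| + Λ * K₂ := by gcongr
    _ = |f 0| * K₁ ^ q + Λ * K₂ := by ring

lemma abs_scaledNonlinearity_sub_le_mul_sub {a w w' : ℝ}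
    (hf : ∀ r t, 0 ≤ r → r ≤ t → |f t - f r| ≤ ω t * (t - r))
    (hω : a ^ (q - 1) * ω (w / a) ≤ Λ) (ha : 0 < a) (hw' : 0 ≤ w') (hww : w' ≤ w) :
    |scaledNonlinearity f q a w - scaledNonlinearity f q a w'| ≤ Λ * (w - w') := by
  have hweight :
      a ^ q * (ω (w / a) * (w / a - w' / a)) = a ^ (q - 1) * ω (w / a) * (w - w') := by
    rw [rpow_sub_one ha.ne']
    field_simp
  calc |scaledNonlinearity f q a w - scaledNonlinearity f q a w'|
      = a ^ q * |f (w / a) - f (w' / a)| := by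
        rw [scaledNonlinearity, scaledNonlinearity, ← mul_sub, abs_mul,
          abs_of_pos (by positivity)]
    _ ≤ a ^ q * (ω (w / a) * (w / a - w' / a)) := by
        gcongr
        exact hf _ _ (by positivity) (by gcongr)
    _ ≤ Λ * (w - w') := by
        rw [hweight]
        exact mul_le_mul_of_nonneg_right hω (by linarith)

lemma abs_scaledNonlinearity_sub_le_mul_log_sub {a b w K₂ B : ℝ} (hq : 0 ≤ q) (hΛ : 0 ≤ Λ)
    (hf : ∀ r t, 0 ≤ r → r ≤ t → |f t - f r| ≤ ω t * (t - r))
    (hω : b ^ (q - 1) * ω (w / b) ≤ Λ) (hB : |scaledNonlinearity f q a w| ≤ B)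
    (hb : 0 < b) (hba : b ≤ a) (hw : 0 ≤ w) (hwK : w ≤ K₂) :
    |scaledNonlinearity f q a w - scaledNonlinearity f q b w| ≤
      (q * B + Λ * K₂) * (log a - log b) := by
  have ha : 0 < a := hb.trans_le hba
  have hlog : 0 ≤ log a - log b := sub_nonneg.mpr (log_le_log hb hba)
  have hpow : b ^ q ≤ a ^ q := rpow_le_rpow hb.le hba hq
  have hratio : 1 - b / a ≤ log a - log b := by
    have := rpow_sub_rpow_le_mul_log_sub 1 ha hb
    simp only [rpow_one, one_mul] at this
    rw [one_sub_div ha.ne', div_le_iff₀ ha]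
    linarith
  have hfirst : |(a ^ q - b ^ q) * f (w / a)| ≤ q * B * (log a - log b) := by
    rw [abs_mul, abs_of_nonneg (sub_nonneg.mpr hpow)]
    calc (a ^ q - b ^ q) * |f (w / a)| ≤ q * a ^ q * (log a - log b) * |f (w / a)| := by
          gcongr; exact rpow_sub_rpow_le_mul_log_sub q ha hb
      _ = q * (log a - log b) * |scaledNonlinearity f q a w| := by
          rw [scaledNonlinearity, abs_mul, abs_of_pos (by positivity : 0 < a ^ q)]; ring
      _ ≤ q * B * (log a - log b) := by
          rw [mul_right_comm]; gcongr
  have hweight : b ^ q * (ω (w / b) * (w / b - w / a)) =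
      b ^ (q - 1) * ω (w / b) * (w * (1 - b / a)) := by
    rw [rpow_sub_one hb.ne']
    field_simp
  have hsecond : |b ^ q * (f (w / a) - f (w / b))| ≤ Λ * K₂ * (log a - log b) := by
    have hwb : w / a ≤ w / b := div_le_div_of_nonneg_left hw hb hba
    have hfrac : 0 ≤ 1 - b / a := sub_nonneg.mpr ((div_le_one ha).mpr hba)
    rw [abs_mul, abs_of_pos (by positivity), abs_sub_comm]
    calc b ^ q * |f (w / b) - f (w / a)| ≤ b ^ q * (ω (w / b) * (w / b - w / a)) := by
          gcongr; exact hf _ _ (by positivity) hwb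
      _ = b ^ (q - 1) * ω (w / b) * (w * (1 - b / a)) := hweight
      _ ≤ Λ * (w * (1 - b / a)) := mul_le_mul_of_nonneg_right hω (mul_nonneg hw hfrac)
      _ ≤ Λ * (K₂ * (log a - log b)) := by gcongr; linarith
      _ = Λ * K₂ * (log a - log b) := by ring
  calc |scaledNonlinearity f q a w - scaledNonlinearity f q b w|
      = |(a ^ q - b ^ q) * f (w / a) + b ^ q * (f (w / a) - f (w / b))| := by
        rw [scaledNonlinearity, scaledNonlinearity]; ring_nf
    _ ≤ q * B * (log a - log b) + Λ * K₂ * (log a - log b) :=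
        (abs_add_le _ _).trans (add_le_add hfirst hsecond)
    _ = (q * B + Λ * K₂) * (log a - log b) := by ring

lemma abs_scaledNonlinearity_sub_le {K₁ K₂ a b w w' : ℝ} (hq : 0 ≤ q) (hΛ : 0 ≤ Λ)
    (hf : ∀ r t, 0 ≤ r → r ≤ t → |f t - f r| ≤ ω t * (t - r))
    (hω : ∀ a w, 0 < a → a ≤ K₁ → 0 ≤ w → w ≤ K₂ → a ^ (q - 1) * ω (w / a) ≤ Λ)
    (ha : 0 < a) (haK : a ≤ K₁) (hb : 0 < b) (hbK : b ≤ K₁)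
    (hw : 0 ≤ w) (hwK : w ≤ K₂) (hw' : 0 ≤ w') (hw'K : w' ≤ K₂) :
    |scaledNonlinearity f q a w - scaledNonlinearity f q b w'| ≤
      (q * (|f 0| * K₁ ^ q + Λ * K₂) + Λ * K₂) * |log a - log b| + Λ * |w - w'| := by
  have hvary_a : |scaledNonlinearity f q a w - scaledNonlinearity f q b w| ≤
      (q * (|f 0| * K₁ ^ q + Λ * K₂) + Λ * K₂) * |log a - log b| := by
    rcases le_total b a with hba | hab
    · rw [abs_of_nonneg (sub_nonneg.mpr (log_le_log hb hba))]
      exact abs_scaledNonlinearity_sub_le_mul_log_sub hq hΛ hf (hω b w hb hbK hw hwK)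
        (abs_scaledNonlinearity_le hq hΛ hf (hω a w ha haK hw hwK) ha haK hw hwK) hb hba hw hwK
    · rw [abs_sub_comm, abs_sub_comm (log a),
        abs_of_nonneg (sub_nonneg.mpr (log_le_log ha hab))]
      exact abs_scaledNonlinearity_sub_le_mul_log_sub hq hΛ hf (hω a w ha haK hw hwK)
        (abs_scaledNonlinearity_le hq hΛ hf (hω b w hb hbK hw hwK) hb hbK hw hwK) ha hab hw hwK
  have hvary_w : |scaledNonlinearity f q b w - scaledNonlinearity f q b w'| ≤ Λ * |w - w'| := by
    rcases le_total w' w with hww | hww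
    · rw [abs_of_nonneg (sub_nonneg.mpr hww)]
      exact abs_scaledNonlinearity_sub_le_mul_sub hf (hω b w hb hbK hw hwK) hb hw' hww
    · rw [abs_sub_comm, abs_sub_comm w, abs_of_nonneg (sub_nonneg.mpr hww)]
      exact abs_scaledNonlinearity_sub_le_mul_sub hf (hω b w' hb hbK hw' hw'K) hb hw hww
  exact (abs_sub_le _ _ _).trans (add_le_add hvary_a hvary_w)

lemma exists_bound_and_holder_scaledNonlinearity_comp {E : Type*} [SeminormedAddCommGroup E]
    {H v : E → ℝ} {K₁ K₂ L M γ : ℝ} (hq : 0 ≤ q) (hΛ : 0 ≤ Λ) (hL : 0 ≤ L) (hγ0 : 0 ≤ γ)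
    (hγ1 : γ ≤ 1) (hf : ∀ r t, 0 ≤ r → r ≤ t → |f t - f r| ≤ ω t * (t - r))
    (hω : ∀ a w, 0 < a → a ≤ K₁ → 0 ≤ w → w ≤ K₂ → a ^ (q - 1) * ω (w / a) ≤ Λ)
    (hHpos : ∀ x, 0 < H x) (hHle : ∀ x, H x ≤ K₁)
    (hlog : ∀ x y, |log (H x) - log (H y)| ≤ L * ‖x - y‖)
    (hv0 : ∀ x, 0 ≤ v x) (hvle : ∀ x, v x ≤ K₂) (hvhold : ∀ x y, |v x - v y| ≤ M * ‖x - y‖ ^ γ) :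
    ∃ C, 0 < C ∧ (∀ x, |scaledNonlinearity f q (H x) (v x)| ≤ C) ∧
      ∀ x y, |scaledNonlinearity f q (H x) (v x) - scaledNonlinearity f q (H y) (v y)| ≤
        C * ‖x - y‖ ^ γ := by
  set c := q * (|f 0| * K₁ ^ q + Λ * K₂) + Λ * K₂
  refine exists_bound_and_holder_of_local (A := c * L + Λ * M) hγ0
    (fun x => abs_scaledNonlinearity_le hq hΛ hf (hω _ _ (hHpos x) (hHle x) (hv0 x) (hvle x))
      (hHpos x) (hHle x) (hv0 x) (hvle x)) fun x y hxy => ?_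
  have hc : 0 ≤ c := by
    have hK₁ : 0 ≤ K₁ := (hHpos 0).le.trans (hHle 0)
    have hK₂ : 0 ≤ K₂ := (hv0 0).trans (hvle 0)
    positivity
  have hdist : ‖x - y‖ ≤ ‖x - y‖ ^ γ := self_le_rpow_of_le_one (norm_nonneg _) hxy.le hγ1
  calc |scaledNonlinearity f q (H x) (v x) - scaledNonlinearity f q (H y) (v y)|
      ≤ c * |log (H x) - log (H y)| + Λ * |v x - v y| :=
        abs_scaledNonlinearity_sub_le hq hΛ hf hω (hHpos x) (hHle x) (hHpos y) (hHle y)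
          (hv0 x) (hvle x) (hv0 y) (hvle y)
    _ ≤ c * (L * ‖x - y‖ ^ γ) + Λ * (M * ‖x - y‖ ^ γ) := by
        gcongr c * ?_ + Λ * ?_
        · exact (hlog x y).trans (by gcongr)
        · exact hvhold x y
    _ = (c * L + Λ * M) * ‖x - y‖ ^ γ := by ring

end

theorem stmt14_general (n : ℕ) (s γ : ℝ)
    (hγ0 : 0 < γ) (hγ1 : γ < 1) (C₁ : ℝ) (hC₁ : 0 < C₁)
    (H : EuclideanSpace ℝ (Fin n) → ℝ) (hHpos : ∀ x, 0 < H x)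
    (hHdiff : ContDiff ℝ 1 H)
    (hHbd : ∀ x, |H x| ≤ C₁)
    (hHgrad : ∀ x, ‖fderiv ℝ H x‖ ≤ C₁ * H x)
    (f : ℝ → ℝ)
    (p μ C : ℝ) (hp2 : p < ((n : ℝ) + 2 * s) / ((n : ℝ) - 2 * s))
    (hμ0 : 0 < μ) (hμ : μ ≤ p - 1) (hC : 0 < C)
    (hf_lip : ∀ r t : ℝ, 0 ≤ r → r < t →
      |f t - f r| ≤ C * (t ^ μ + t ^ (p - 1)) * (t - r))
    (v : EuclideanSpace ℝ (Fin n) → ℝ) (hv0 : ∀ x, 0 ≤ v x)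
    (Kv : ℝ) (hvbd : ∀ x, |v x| ≤ Kv)
    (hvhold : ∀ x y, |v x - v y| ≤ Kv * ‖x - y‖ ^ γ) :
    ∃ C' : ℝ, 0 < C' ∧
      (∀ x, |H x ^ (((n : ℝ) + 2 * s) / ((n : ℝ) - 2 * s)) * f (v x / H x)| ≤ C') ∧
      (∀ x y,
        |H x ^ (((n : ℝ) + 2 * s) / ((n : ℝ) - 2 * s)) * f (v x / H x) -
            H y ^ (((n : ℝ) + 2 * s) / ((n : ℝ) - 2 * s)) * f (v y / H y)| ≤
          C' * ‖x - y‖ ^ γ) := by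
  set q := ((n : ℝ) + 2 * s) / ((n : ℝ) - 2 * s)
  have hq : 0 ≤ q := by linarith
  have hKv : 0 ≤ Kv := (abs_nonneg _).trans (hvbd 0)
  set Λ := C * (C₁ ^ (q - 1 - μ) * Kv ^ μ + C₁ ^ (q - 1 - (p - 1)) * Kv ^ (p - 1))
  have hf : ∀ r t, 0 ≤ r → r ≤ t → |f t - f r| ≤ C * (t ^ μ + t ^ (p - 1)) * (t - r) := by
    intro r t hr hrt
    rcases hrt.eq_or_lt with rfl | hlt
    · simp
    · exact hf_lip r t hr hlt
  have hω : ∀ a w, 0 < a → a ≤ C₁ → 0 ≤ w → w ≤ Kv →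
      a ^ (q - 1) * (C * ((w / a) ^ μ + (w / a) ^ (p - 1))) ≤ Λ := by
    intro a w ha haK hw hwK
    rw [mul_left_comm, mul_add]
    exact mul_le_mul_of_nonneg_left
      (add_le_add (rpow_mul_div_rpow_le hμ0.le (by linarith) ha haK hw hwK)
        (rpow_mul_div_rpow_le (by linarith) (by linarith) ha haK hw hwK)) hC.le
  exact exists_bound_and_holder_scaledNonlinearity_comp hq (by positivity) hC₁.le hγ0.le hγ1.le
    hf hω hHpos (fun x => (le_abs_self _).trans (hHbd x))
    (abs_log_sub_log_le_of_norm_fderiv_le (hHdiff.differentiable one_ne_zero) hHpos hHgrad)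
    hv0 (fun x => (le_abs_self _).trans (hvbd x)) hvhold

/-- Lemma 4.3(i): Hölder regularity of the conformally transformed nonlinearity. With
`q = (n+2s)/(n-2s)`, if `H > 0` is `C¹` with `C^{0,γ}`-norm bounded by `C₁`,
`|∇H| ≤ C₁ H`, and `H(x)/H(y) ≤ C₁` for `|x-y| < 1`, and `f : [0,∞) → [0,∞)` is
continuous with `f(t)t^{-q}` nonincreasing and positive on `(0,∞)` and
`|f(t)-f(r)| ≤ C(t^μ + t^{p-1})(t-r)` for `0 ≤ r < t`, then for nonnegative
`v ∈ C^{0,γ}(ℝⁿ)` the function `x ↦ H(x)^q f(H(x)⁻¹ v(x))` is in `C^{0,γ}(ℝⁿ)` with a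
bound depending only on `C₁`, `f` and the `C^{0,γ}` data of `v`. -/
theorem stmt14 (n : ℕ) (hn : 1 ≤ n) (s γ : ℝ) (hs : 0 < s) (hsn : 2 * s < (n : ℝ))
    (hγ0 : 0 < γ) (hγ1 : γ < 1) (C₁ : ℝ) (hC₁ : 0 < C₁)
    (H : EuclideanSpace ℝ (Fin n) → ℝ) (hHpos : ∀ x, 0 < H x)
    (hHdiff : ContDiff ℝ 1 H)
    (hHbd : ∀ x, |H x| ≤ C₁)
    (hHhold : ∀ x y, |H x - H y| ≤ C₁ * ‖x - y‖ ^ γ)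
    (hHgrad : ∀ x, ‖fderiv ℝ H x‖ ≤ C₁ * H x)
    (hHratio : ∀ x y, ‖x - y‖ < 1 → H x / H y ≤ C₁)
    (f : ℝ → ℝ) (hf_cont : ContinuousOn f (Set.Ici 0))
    (hf_nonneg : ∀ t : ℝ, 0 ≤ t → 0 ≤ f t)
    (p μ C : ℝ) (hp1 : 1 < p) (hp2 : p < ((n : ℝ) + 2 * s) / ((n : ℝ) - 2 * s))
    (hμ0 : 0 < μ) (hμ : μ ≤ p - 1) (hC : 0 < C)
    (hf_mono : ∀ r t : ℝ, 0 < r → r ≤ t →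
      f t * t ^ (-(((n : ℝ) + 2 * s) / ((n : ℝ) - 2 * s))) ≤
        f r * r ^ (-(((n : ℝ) + 2 * s) / ((n : ℝ) - 2 * s))))
    (hf_pos : ∀ t : ℝ, 0 < t →
      0 < f t * t ^ (-(((n : ℝ) + 2 * s) / ((n : ℝ) - 2 * s))))
    (hf_lip : ∀ r t : ℝ, 0 ≤ r → r < t →
      |f t - f r| ≤ C * (t ^ μ + t ^ (p - 1)) * (t - r))
    (v : EuclideanSpace ℝ (Fin n) → ℝ) (hv0 : ∀ x, 0 ≤ v x)
    (Kv : ℝ) (hvbd : ∀ x, |v x| ≤ Kv)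
    (hvhold : ∀ x y, |v x - v y| ≤ Kv * ‖x - y‖ ^ γ) :
    ∃ C' : ℝ, 0 < C' ∧
      (∀ x, |H x ^ (((n : ℝ) + 2 * s) / ((n : ℝ) - 2 * s)) * f (v x / H x)| ≤ C') ∧
      (∀ x y,
        |H x ^ (((n : ℝ) + 2 * s) / ((n : ℝ) - 2 * s)) * f (v x / H x) -
            H y ^ (((n : ℝ) + 2 * s) / ((n : ℝ) - 2 * s)) * f (v y / H y)| ≤
          C' * ‖x - y‖ ^ γ) :=
  stmt14_general n s γ hγ0 hγ1 C₁ hC₁ H hHpos hHdiff hHbd hHgrad f p μ C hp2 hμ0 hμ hC hf_lip v hv0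
    Kv hvbd hvhold
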